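/- There is a constant C > 0 such that for all t ≥ s > 0 and x, y ∈ ℝ, E[(u(t,x) - u(s,y))²] ≤ C(√(t-s) + |x-y|). -/

import Mathlib

open MeasureTheory Real

/-!
Put `v = t + s - 2r` and split the integrand of `Δ(s,t,z)` into the bracket
`(2(t-r))^{-1/2} + (2(s-r))^{-1/2} - 2 v^{-1/2}` and the Gaussian defect
`2 v^{-1/2} (1 - exp(-z²/(2v)))`. The bracket integrates in closed form to
`√(2t) + √(2s) - 2√(t+s) + (2 - √2)√(t-s)`, which is at most `(2 - √2)√(t-s)` by concavity of `√`.
Since `1 - e^{-u} ≤ 2u/(1+u)`, the defect is at most `4z² / (√v (2v + z²))`, the derivative in `r`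
of `-2√2|z| arctan(√(2v)/|z|)`, so its integral is at most `√2 π |z|`.
-/

/-- The function `Δ(s,t,z)`. -/
noncomputable def heatDelta (s t z : ℝ) : ℝ :=
  ∫ r in Set.Ioc (0 : ℝ) s,
    ((Real.sqrt (2 * (t - r)))⁻¹
      - 2 * (Real.sqrt (t + s - 2 * r))⁻¹ * Real.exp (-z ^ 2 / (2 * (t + s - 2 * r)))
      + (Real.sqrt (2 * (s - r)))⁻¹)

theorem integral_eq_sub_of_hasDerivAt_of_nonneg {g g' : ℝ → ℝ} {a b : ℝ} (hab : a ≤ b)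
    (hcont : ContinuousOn g (Set.Icc a b)) (hderiv : ∀ x ∈ Set.Ioo a b, HasDerivAt g (g' x) x)
    (hpos : ∀ x ∈ Set.Ioo a b, 0 ≤ g' x) :
    IntervalIntegrable g' volume a b ∧ ∫ x in a..b, g' x = g b - g a := by
  have hint : IntervalIntegrable g' volume a b :=
    (intervalIntegrable_iff_integrableOn_Ioc_of_le hab).2
      (intervalIntegral.integrableOn_deriv_of_nonneg hcont hderiv hpos)
  exact ⟨hint, intervalIntegral.integral_eq_sub_of_hasDerivAt_of_le hab hcont hderiv hint⟩

theorem one_sub_exp_neg_le {u : ℝ} (hu : 0 ≤ u) : 1 - exp (-u) ≤ 2 * u / (1 + u) := by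
  have hexp : 1 - u ≤ exp (-u) := by linarith [add_one_le_exp (-u)]
  rw [le_div_iff₀ (by linarith)]
  nlinarith [exp_pos (-u)]

theorem two_mul_inv_sqrt_mul_one_sub_exp_le {v : ℝ} (hv : 0 ≤ v) (z : ℝ) :
    2 * (√v)⁻¹ * (1 - exp (-z ^ 2 / (2 * v))) ≤ 4 * z ^ 2 / (√v * (2 * v + z ^ 2)) := by
  rcases hv.eq_or_lt with rfl | hv
  · simp
  have hu := one_sub_exp_neg_le (u := z ^ 2 / (2 * v)) (by positivity)
  have hsv : 0 < √v := sqrt_pos.2 hv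
  calc 2 * (√v)⁻¹ * (1 - exp (-z ^ 2 / (2 * v)))
      ≤ 2 * (√v)⁻¹ * (2 * (z ^ 2 / (2 * v)) / (1 + z ^ 2 / (2 * v))) := by
        rw [neg_div]; gcongr
    _ = 4 * z ^ 2 / (√v * (2 * v + z ^ 2)) := by field_simp; ring

theorem sqrt_two_mul_add_sqrt_two_mul_le {a b : ℝ} (ha : 0 ≤ a) (hb : 0 ≤ b) :
    √(2 * a) + √(2 * b) ≤ 2 * √(a + b) := by
  rw [show 2 * √(a + b) = √(4 * (a + b)) by
    rw [sqrt_mul zero_le_four, show (4 : ℝ) = 2 ^ 2 by norm_num, sqrt_sq zero_le_two]]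
  rw [le_sqrt (by positivity) (by positivity)]
  nlinarith [sq_sqrt (by positivity : 0 ≤ 2 * a), sq_sqrt (by positivity : 0 ≤ 2 * b),
    sq_nonneg (√(2 * a) - √(2 * b))]

section

variable {a b c : ℝ}

theorem hasDerivAt_neg_sqrt_sub_two_mul {r : ℝ} (h : 0 < c - 2 * r) :
    HasDerivAt (fun r => -√(c - 2 * r)) (√(c - 2 * r))⁻¹ r := by
  have hlin : HasDerivAt (fun r => c - 2 * r) (-2) r := by
    simpa using ((hasDerivAt_id r).const_mul 2).const_sub c
  refine (hlin.sqrt h.ne').neg.congr_deriv ?_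
  field_simp

theorem integral_inv_sqrt_sub_two_mul (hab : a ≤ b) (hbc : 2 * b ≤ c) :
    IntervalIntegrable (fun r => (√(c - 2 * r))⁻¹) volume a b ∧
      ∫ r in a..b, (√(c - 2 * r))⁻¹ = √(c - 2 * a) - √(c - 2 * b) := by
  have := integral_eq_sub_of_hasDerivAt_of_nonneg hab (g := fun r => -√(c - 2 * r))
    (by fun_prop) (fun r hr => hasDerivAt_neg_sqrt_sub_two_mul (by linarith [hr.2]))
    (fun r _ => by positivity)
  exact ⟨this.1, by rw [this.2]; ring⟩

theorem hasDerivAt_arctan_sqrt_sub_two_mul {z r : ℝ} (hz : z ≠ 0) (h : 0 < c - 2 * r) :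
    HasDerivAt (fun r => -(2 * √2 * |z|) * arctan (√(2 * (c - 2 * r)) / |z|))
      (4 * z ^ 2 / (√(c - 2 * r) * (2 * (c - 2 * r) + z ^ 2))) r := by
  have hlin : HasDerivAt (fun r => 2 * (c - 2 * r)) (-4) r :=
    ((((hasDerivAt_id r).const_mul 2).const_sub c).const_mul 2).congr_deriv (by norm_num)
  refine (((hlin.sqrt (by positivity)).div_const |z|).arctan.const_mul _).congr_deriv ?_
  have hz' : 0 < |z| := abs_pos.2 hz
  rw [sqrt_mul zero_le_two]
  field_simp
  rw [sq_sqrt h.le, sq_sqrt zero_le_two, sq_abs]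
  ring

theorem integral_defect_majorant_le (hab : a ≤ b) (hbc : 2 * b ≤ c) (z : ℝ) :
    IntervalIntegrable (fun r => 4 * z ^ 2 / (√(c - 2 * r) * (2 * (c - 2 * r) + z ^ 2)))
      volume a b ∧
    ∫ r in a..b, 4 * z ^ 2 / (√(c - 2 * r) * (2 * (c - 2 * r) + z ^ 2)) ≤ √2 * π * |z| := by
  rcases eq_or_ne z 0 with rfl | hz
  · simp
  obtain ⟨hint, heq⟩ := integral_eq_sub_of_hasDerivAt_of_nonneg hab
    (g := fun r => -(2 * √2 * |z|) * arctan (√(2 * (c - 2 * r)) / |z|))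
    ((continuous_arctan.comp (by fun_prop)).const_mul _).continuousOn
    (fun r hr => hasDerivAt_arctan_sqrt_sub_two_mul hz (by linarith [hr.2])) (fun r hr => by
      have : 0 ≤ c - 2 * r := by linarith [hr.2]
      positivity)
  refine ⟨hint, heq ▸ ?_⟩
  have hb : 0 ≤ arctan (√(2 * (c - 2 * b)) / |z|) := arctan_nonneg.2 (by positivity)
  have ha : arctan (√(2 * (c - 2 * a)) / |z|) ≤ π / 2 := (arctan_lt_pi_div_two _).le
  have : 0 ≤ √2 * |z| := by positivity
  nlinarith

theorem integral_gaussian_defect_le (hab : a ≤ b) (hbc : 2 * b ≤ c) (z : ℝ) :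
    IntervalIntegrable (fun r => 2 * (√(c - 2 * r))⁻¹ * (1 - exp (-z ^ 2 / (2 * (c - 2 * r)))))
      volume a b ∧
    ∫ r in a..b, 2 * (√(c - 2 * r))⁻¹ * (1 - exp (-z ^ 2 / (2 * (c - 2 * r)))) ≤
      √2 * π * |z| := by
  obtain ⟨hint, hle⟩ := integral_defect_majorant_le hab hbc z
  have hbound : ∀ r ∈ Set.Icc a b,
      0 ≤ 2 * (√(c - 2 * r))⁻¹ * (1 - exp (-z ^ 2 / (2 * (c - 2 * r)))) ∧
      2 * (√(c - 2 * r))⁻¹ * (1 - exp (-z ^ 2 / (2 * (c - 2 * r)))) ≤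
        4 * z ^ 2 / (√(c - 2 * r) * (2 * (c - 2 * r) + z ^ 2)) := by
    intro r hr
    have hv : 0 ≤ c - 2 * r := by linarith [hr.2]
    have hexp : exp (-z ^ 2 / (2 * (c - 2 * r))) ≤ 1 :=
      exp_le_one_iff.2 (div_nonpos_of_nonpos_of_nonneg (neg_nonpos.2 (sq_nonneg z)) (by positivity))
    exact ⟨mul_nonneg (by positivity) (by linarith), two_mul_inv_sqrt_mul_one_sub_exp_le hv z⟩
  have hdef : IntervalIntegrable
      (fun r => 2 * (√(c - 2 * r))⁻¹ * (1 - exp (-z ^ 2 / (2 * (c - 2 * r))))) volume a b := by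
    refine hint.mono_fun' (by fun_prop) ?_
    filter_upwards [ae_restrict_mem measurableSet_uIoc] with r hr
    rw [Set.uIoc_of_le hab] at hr
    obtain ⟨h0, h1⟩ := hbound r (Set.Ioc_subset_Icc_self hr)
    rwa [Real.norm_eq_abs, abs_of_nonneg h0]
  exact ⟨hdef,
    (intervalIntegral.integral_mono_on hab hdef hint fun r hr => (hbound r hr).2).trans hle⟩

end

section HeatDelta

variable {s t : ℝ}

theorem integral_inv_sqrt_combination_le (hs : 0 ≤ s) (hst : s ≤ t) :
    IntervalIntegrable
      (fun r => (√(2 * (t - r)))⁻¹ + (√(2 * (s - r)))⁻¹ - 2 * (√(t + s - 2 * r))⁻¹) volume 0 s ∧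
    ∫ r in 0..s, ((√(2 * (t - r)))⁻¹ + (√(2 * (s - r)))⁻¹ - 2 * (√(t + s - 2 * r))⁻¹) ≤
      (2 - √2) * √(t - s) := by
  obtain ⟨ht, et⟩ := integral_inv_sqrt_sub_two_mul (c := 2 * t) hs (by linarith)
  obtain ⟨hs', es⟩ := integral_inv_sqrt_sub_two_mul (c := 2 * s) hs le_rfl
  obtain ⟨hts, ets⟩ := integral_inv_sqrt_sub_two_mul (c := t + s) hs (by linarith)
  simp only [← mul_sub, mul_zero, sub_zero, sub_self, sqrt_zero] at ht et hs' es ets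
  have hint := (ht.add hs').sub (hts.const_mul 2)
  refine ⟨hint, ?_⟩
  rw [intervalIntegral.integral_sub (ht.add hs') (hts.const_mul 2),
    intervalIntegral.integral_add ht hs', intervalIntegral.integral_const_mul, et, es, ets,
    show t + s - 2 * s = t - s by ring, sqrt_mul zero_le_two (t - s)]
  have := sqrt_two_mul_add_sqrt_two_mul_le (by linarith : 0 ≤ t) hs
  linarith

theorem heatDelta_le (hs : 0 ≤ s) (hst : s ≤ t) (z : ℝ) :
    heatDelta s t z ≤ (2 - √2) * √(t - s) + √2 * π * |z| := by
  obtain ⟨hA, eA⟩ := integral_inv_sqrt_combination_le hs hst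
  obtain ⟨hB, eB⟩ := integral_gaussian_defect_le (c := t + s) hs (by linarith) z
  have hsplit : heatDelta s t z = (∫ r in 0..s,
      ((√(2 * (t - r)))⁻¹ + (√(2 * (s - r)))⁻¹ - 2 * (√(t + s - 2 * r))⁻¹)) +
      ∫ r in 0..s, 2 * (√(t + s - 2 * r))⁻¹ * (1 - exp (-z ^ 2 / (2 * (t + s - 2 * r)))) := by
    rw [heatDelta, ← intervalIntegral.integral_of_le hs, ← intervalIntegral.integral_add hA hB]
    congr 1 with r
    ring
  linarith

end HeatDelta

/-- There is `C > 0` such that for all `t ≥ s > 0` and `x, y ∈ ℝ`,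
`E[(u(t,x)-u(s,y))²] = (1/√(2π))(√(2(t-s)) + Δ(s,t,x-y)) ≤ C(√(t-s) + |x-y|)`. -/
theorem stmt_2 :
    ∃ C > (0 : ℝ), ∀ t s x y : ℝ, 0 < s → s ≤ t →
      (Real.sqrt (2 * π))⁻¹ * (Real.sqrt (2 * (t - s)) + heatDelta s t (x - y)) ≤
        C * (Real.sqrt (t - s) + |x - y|) := by
  refine ⟨8, by norm_num, fun t s x y hs hst => ?_⟩
  have hvar : √(2 * (t - s)) + heatDelta s t (x - y) ≤ 2 * √(t - s) + √2 * π * |x - y| := by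
    have := heatDelta_le hs.le hst (x - y)
    rw [sqrt_mul zero_le_two]
    linarith
  have hnorm : (√(2 * π))⁻¹ ≤ 1 :=
    inv_le_one_of_one_le₀ (one_le_sqrt.2 (by linarith [pi_gt_three]))
  have hconst : √2 * π ≤ 8 := by
    nlinarith [sq_sqrt (zero_le_two : (0 : ℝ) ≤ 2), sqrt_nonneg 2, pi_le_four, pi_pos]
  calc (√(2 * π))⁻¹ * (√(2 * (t - s)) + heatDelta s t (x - y))
      ≤ (√(2 * π))⁻¹ * (2 * √(t - s) + √2 * π * |x - y|) := by gcongr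
    _ ≤ 1 * (2 * √(t - s) + √2 * π * |x - y|) := by gcongr
    _ ≤ 8 * (√(t - s) + |x - y|) := by nlinarith [sqrt_nonneg (t - s), abs_nonneg (x - y)]
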